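/- For all integers k ≥ 1 and D ≥ k, the Gram matrix G_D is invertible and ∑_{τ ∈ S_k} |Wg^U(τ, D)| = (D−k)!/D!, where the sum is over all permutations τ of {1,...,k}. -/

import Mathlib

open Matrix

/-- The number of cycles of a permutation, counting fixed points as (trivial) cycles. -/
def numCycles {k : ℕ} (σ : Equiv.Perm (Fin k)) : ℕ :=
  Multiset.card σ.cycleType + (k - σ.support.card)

/-- The Gram matrix `G_D(σ,τ) = D^{#(σ⁻¹τ)}` on permutations of `{1,…,k}`. -/
def permGram (k D : ℕ) : Matrix (Equiv.Perm (Fin k)) (Equiv.Perm (Fin k)) ℝ :=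
  fun σ τ => (D : ℝ) ^ numCycles (σ⁻¹ * τ)

/-!
In the group algebra of `S_k`, `∑_π sign π · D^{#π} π = (D - J_0) ⋯ (D - J_{k-1})`, where
`J_t = ∑_{j<t} (j t)` are the Jucys–Murphy elements (peel off the largest letter: it is either a
fixed point, adding a cycle, or is inserted into an existing cycle by a transposition).
In the right regular representation, `G_D` conjugated by the diagonal sign matrix is therefore a
product of matrices `D • 1 - J_t`, where `J_t` is entrywise nonnegative with row sums `t < D`.
Each factor is an M-matrix, so its inverse is entrywise nonnegative; hence
`|Wg^U(τ, D)| = sign τ · Wg^U(τ, D)`, and the sum of these is a row sum of the inverse of a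
matrix with constant row sums `D (D-1) ⋯ (D-k+1) = D! / (D-k)!`.
-/

open Equiv Equiv.Perm Finset

namespace Matrix

section NonnegInverse

variable {ι : Type*} [Fintype ι] [DecidableEq ι] {S : Matrix ι ι ℝ} {r d : ℝ}

theorem nonneg_of_smul_one_sub_mulVec_nonneg (hS : ∀ i j, 0 ≤ S i j)
    (hrow : ∀ i, ∑ j, S i j ≤ r) (hrd : r < d) {x : ι → ℝ}
    (hx : 0 ≤ (d • 1 - S) *ᵥ x) : 0 ≤ x := by
  intro i
  obtain ⟨i₀, -, hmin⟩ := exists_min_image univ x ⟨i, mem_univ i⟩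
  suffices 0 ≤ x i₀ from this.trans (hmin i (mem_univ i))
  by_contra! hneg
  have hS_x : r * x i₀ ≤ ∑ j, S i₀ j * x j :=
    calc r * x i₀ ≤ (∑ j, S i₀ j) * x i₀ := mul_le_mul_of_nonpos_right (hrow i₀) hneg.le
      _ = ∑ j, S i₀ j * x i₀ := sum_mul ..
      _ ≤ ∑ j, S i₀ j * x j :=
        sum_le_sum fun j _ => mul_le_mul_of_nonneg_left (hmin j (mem_univ j)) (hS i₀ j)
  have hval : ((d • 1 - S) *ᵥ x) i₀ = d * x i₀ - ∑ j, S i₀ j * x j := by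
    rw [sub_mulVec, smul_mulVec, one_mulVec]; rfl
  have := hx i₀
  rw [Pi.zero_apply, hval] at this
  nlinarith

theorem isUnit_smul_one_sub (hS : ∀ i j, 0 ≤ S i j) (hrow : ∀ i, ∑ j, S i j ≤ r) (hrd : r < d) :
    IsUnit (d • 1 - S) := by
  refine mulVec_injective_iff_isUnit.1 fun x y hxy => ?_
  have h0 : (d • 1 - S) *ᵥ (x - y) = 0 := by rw [mulVec_sub, hxy, sub_self]
  have hpos := nonneg_of_smul_one_sub_mulVec_nonneg hS hrow hrd h0.ge
  have hneg := nonneg_of_smul_one_sub_mulVec_nonneg hS hrow hrd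
    (by rw [mulVec_neg, h0, neg_zero] : 0 ≤ (d • 1 - S) *ᵥ -(x - y))
  exact sub_eq_zero.1 (le_antisymm (neg_nonneg.1 hneg) hpos)

theorem inv_smul_one_sub_nonneg (hS : ∀ i j, 0 ≤ S i j) (hrow : ∀ i, ∑ j, S i j ≤ r)
    (hrd : r < d) (i j : ι) : 0 ≤ (d • 1 - S)⁻¹ i j := by
  have hcol : (d • 1 - S) *ᵥ ((d • 1 - S)⁻¹ *ᵥ Pi.single j 1) = Pi.single j 1 := by
    rw [mulVec_mulVec, mul_nonsing_inv _
      ((isUnit_iff_isUnit_det _).1 (isUnit_smul_one_sub hS hrow hrd)), one_mulVec]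
  have := nonneg_of_smul_one_sub_mulVec_nonneg hS hrow hrd
    (hcol ▸ Pi.single_nonneg.2 zero_le_one) i
  simpa [mulVec_single_one] using this

end NonnegInverse

theorem mul_inv_apply_nonneg {ι : Type*} [Fintype ι] [DecidableEq ι] {A B : Matrix ι ι ℝ}
    (hA : ∀ i j, 0 ≤ A⁻¹ i j) (hB : ∀ i j, 0 ≤ B⁻¹ i j) (i j : ι) :
    0 ≤ (A * B)⁻¹ i j := by
  rw [mul_inv_rev, mul_apply]
  exact sum_nonneg fun l _ => mul_nonneg (hB i l) (hA l j)

theorem sum_inv_apply_eq_inv {ι K : Type*} [Fintype ι] [DecidableEq ι] [Field K]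
    {A : Matrix ι ι K} (hA : IsUnit A) {c : K} (hrow : ∀ i, ∑ j, A i j = c) (i : ι) :
    ∑ j, A⁻¹ i j = c⁻¹ := by
  refine eq_inv_of_mul_eq_one_right ?_
  calc c * ∑ j, A⁻¹ i j = ∑ j, A⁻¹ i j * ∑ l, A j l := by simp [hrow, Finset.mul_sum, mul_comm]
    _ = ∑ l, (A⁻¹ * A) i l := by simp only [mul_apply, Finset.mul_sum]; exact Finset.sum_comm
    _ = 1 := by rw [nonsing_inv_mul _ ((isUnit_iff_isUnit_det A).1 hA)]; simp [one_apply]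

end Matrix

section ConvMatrix

variable {G R : Type*} [Group G]

/-- The matrix of right multiplication by `∑ g, f g • g` in the group algebra. -/
def convMatrix [Semiring R] (f : G → R) : Matrix G G R :=
  of fun σ τ => f (σ⁻¹ * τ)

@[simp]
theorem convMatrix_apply [Semiring R] (f : G → R) (σ τ : G) : convMatrix f σ τ = f (σ⁻¹ * τ) :=
  rfl

theorem convMatrix_single_one [DecidableEq G] [Semiring R] :
    convMatrix (Pi.single (1 : G) (1 : R)) = 1 := by
  ext σ τ
  simp [Matrix.one_apply, Pi.single_apply, inv_mul_eq_one]

variable [Fintype G]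

theorem sum_convMatrix_apply [Semiring R] (f : G → R) (σ : G) :
    ∑ τ, convMatrix f σ τ = ∑ π, f π :=
  Equiv.sum_comp (Equiv.mulLeft σ⁻¹) f

variable [DecidableEq G]

theorem convMatrix_mul_convMatrix_single [Semiring R] (f : G → R) (g : G) :
    convMatrix f * convMatrix (Pi.single g 1) = convMatrix fun π => f (π * g⁻¹) := by
  ext σ τ
  rw [Matrix.mul_apply, Fintype.sum_eq_single (τ * g⁻¹)]
  · simp [mul_assoc]
  · intro ρ hρ
    simp only [convMatrix_apply]
    rw [Pi.single_apply, if_neg, mul_zero]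
    rintro rfl
    simp at hρ

theorem diagonal_mul_convMatrix_mul_diagonal [CommRing R] (χ : G →* ℤˣ) (f : G → R) :
    diagonal (fun g => ((χ g : ℤ) : R)) * convMatrix f * diagonal (fun g => ((χ g : ℤ) : R)) =
      convMatrix fun g => (χ g : ℤ) * f g := by
  ext σ τ
  simp only [mul_diagonal, diagonal_mul, convMatrix_apply, map_mul, map_inv, Int.units_inv_eq_self,
    Units.val_mul, Int.cast_mul]
  ring

end ConvMatrix

section NumCycles

variable {k : ℕ}

theorem card_support_le_fin (g : Perm (Fin k)) : #g.support ≤ k := by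
  simpa using card_le_univ g.support

theorem numCycles_inv (g : Perm (Fin k)) : numCycles g⁻¹ = numCycles g := by
  simp [numCycles, cycleType_inv, support_inv]

theorem numCycles_mul_of_disjoint {a b : Perm (Fin k)} (h : a.Disjoint b) :
    numCycles (a * b) + k = numCycles a + numCycles b := by
  have hcard := card_support_le_fin (a * b)
  rw [h.card_support_mul] at hcard
  simp only [numCycles, h.cycleType_mul, Multiset.card_add, h.card_support_mul]
  omega

theorem numCycles_swap_mul_of_isCycle {c : Perm (Fin k)} (hc : c.IsCycle) {x : Fin k}
    (hx : c x ≠ x) : numCycles (swap x (c x) * c) = numCycles c + 1 := by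
  have hsupp := card_support_le_fin c
  by_cases hcc : c (c x) = x
  · have hswap : c = swap x (c x) := hc.eq_swap_of_apply_apply_eq_self hx hcc
    have h2 : #c.support = 2 := by rw [hswap]; exact card_support_swap (Ne.symm hx)
    have hcc1 : c * c = 1 := by rw [hswap]; exact swap_mul_self _ _
    rw [← hswap, hcc1]
    simp [numCycles, hc.cycleType, h2]
    omega
  · have hsupp' := support_swap_mul_eq c x hcc
    have hxc : x ∈ c.support := mem_support.2 hx
    have hpos := card_pos.2 ⟨x, hxc⟩
    simp only [numCycles, (hc.swap_mul hx hcc).cycleType, hc.cycleType, hsupp',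
      sdiff_singleton_eq_erase, card_erase_of_mem hxc, Multiset.card_singleton]
    omega

theorem numCycles_swap_mul {g : Perm (Fin k)} {x : Fin k} (hx : g x ≠ x) :
    numCycles (swap x (g x) * g) = numCycles g + 1 := by
  -- split off the cycle `c` through `x`; the transposition only acts inside it
  set c := g.cycleOf x
  have hc : c.IsCycle := isCycle_cycleOf g hx
  have hcx : c x = g x := cycleOf_apply_self g x
  have hdisj : (g * c⁻¹).Disjoint c := disjoint_mul_inv_of_mem_cycleFactorsFinset
    (cycleOf_mem_cycleFactorsFinset_iff.2 (mem_support.2 hx))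
  have hg : g = c * (g * c⁻¹) := by rw [← hdisj.commute.eq, inv_mul_cancel_right]
  have hdisj' : (swap x (c x) * c).Disjoint (g * c⁻¹) := by
    refine hdisj.symm.mono (fun y hy => ?_) le_rfl
    exact (mem_support_swap_mul_imp_mem_support_ne hy).1
  have h1 := numCycles_mul_of_disjoint hdisj.symm
  have h2 := numCycles_mul_of_disjoint hdisj'
  rw [← hg] at h1
  rw [mul_assoc, ← hg, numCycles_swap_mul_of_isCycle hc (hcx ▸ hx), hcx] at h2
  omega

theorem numCycles_mul_swap_inv_apply {π : Perm (Fin k)} {x : Fin k} (hx : π x ≠ x) :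
    numCycles (π * swap (π⁻¹ x) x) = numCycles π + 1 := by
  have hx' : π⁻¹ x ≠ x := fun h => hx (inv_eq_iff_eq.1 h).symm
  rw [← numCycles_inv, _root_.mul_inv_rev, swap_inv, Equiv.swap_comm, numCycles_swap_mul hx',
    numCycles_inv]

theorem sub_le_numCycles_of_fixed {π : Perm (Fin k)} {n : ℕ}
    (h : ∀ x : Fin k, n ≤ (x : ℕ) → π x = x) : k - n ≤ numCycles π := by
  have hsupp : #π.support ≤ n := by
    calc #π.support ≤ #(range n) := card_le_card_of_injOn Fin.val
          (fun x hx => mem_range.2 (not_le.1 fun hnx => mem_support.1 hx (h x hnx)))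
          Fin.val_injective.injOn
      _ = n := card_range n
  unfold numCycles
  omega

theorem inv_apply_lt_of_fixed {π : Perm (Fin k)} {t : Fin k}
    (hfix : ∀ x : Fin k, (t : ℕ) + 1 ≤ x → π x = x) (hπt : π t ≠ t) : π⁻¹ t < t := by
  have ha : π (π⁻¹ t) = t := π.apply_symm_apply t
  by_contra! hta
  rcases hta.lt_or_eq with h | h
  · exact h.ne (ha.symm.trans (hfix _ h))
  · rw [← h] at ha
    exact hπt ha

theorem mul_swap_inv_apply_fixed {π : Perm (Fin k)} {t : Fin k}
    (hfix : ∀ x : Fin k, (t : ℕ) + 1 ≤ x → π x = x) (hπt : π t ≠ t) :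
    ∀ x : Fin k, (t : ℕ) ≤ x → (π * swap (π⁻¹ t) t) x = x := by
  have hat : ((π⁻¹ t : Fin k) : ℕ) < t := inv_apply_lt_of_fixed hfix hπt
  intro x hx
  rcases eq_or_lt_of_le hx with h | h
  · rw [← Fin.ext h, Perm.mul_apply, swap_apply_right]
    exact π.apply_symm_apply t
  · rw [Perm.mul_apply, swap_apply_of_ne_of_ne (by omega) (by omega), hfix x h]

end NumCycles

section JucysMurphy

variable {k : ℕ}

noncomputable def jucysMurphy (t : Fin k) : Matrix (Perm (Fin k)) (Perm (Fin k)) ℝ :=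
  ∑ j ∈ Iio t, convMatrix (Pi.single (swap j t) 1)

theorem jucysMurphy_nonneg (t : Fin k) (σ τ : Perm (Fin k)) : 0 ≤ jucysMurphy t σ τ := by
  simp only [jucysMurphy, Matrix.sum_apply, convMatrix_apply, Pi.single_apply]
  exact sum_nonneg fun j _ => ite_nonneg zero_le_one le_rfl

theorem sum_jucysMurphy_apply (t : Fin k) (σ : Perm (Fin k)) :
    ∑ τ, jucysMurphy t σ τ = t := by
  simp only [jucysMurphy, Matrix.sum_apply]
  rw [sum_comm]
  simp_rw [sum_convMatrix_apply]
  simp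

theorem convMatrix_mul_jucysMurphy (f : Perm (Fin k) → ℝ) (t : Fin k) :
    convMatrix f * jucysMurphy t = convMatrix fun π => ∑ j ∈ Iio t, f (π * swap j t) := by
  simp only [jucysMurphy, Matrix.mul_sum, convMatrix_mul_convMatrix_single, swap_inv]
  ext σ τ
  simp [Matrix.sum_apply]

end JucysMurphy

section TruncWeight

variable {k D n : ℕ} {π : Perm (Fin k)}

/-- The coefficient of `π` in `(D - J_0) ⋯ (D - J_{n-1})`: it vanishes unless `π` permutes
`{0, …, n-1}`, and the exponent is the number of cycles of `π` on that set. -/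
noncomputable def truncWeight (k D n : ℕ) (π : Perm (Fin k)) : ℝ :=
  if ∀ x : Fin k, n ≤ (x : ℕ) → π x = x then
    ((sign π : ℤ) : ℝ) * (D : ℝ) ^ (numCycles π - (k - n))
  else 0

theorem truncWeight_of_fixed (h : ∀ x : Fin k, n ≤ (x : ℕ) → π x = x) :
    truncWeight k D n π = ((sign π : ℤ) : ℝ) * (D : ℝ) ^ (numCycles π - (k - n)) :=
  if_pos h

theorem truncWeight_eq_zero {x : Fin k} (hx : n ≤ (x : ℕ)) (h : π x ≠ x) :
    truncWeight k D n π = 0 :=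
  if_neg fun hfix => h (hfix x hx)

theorem truncWeight_zero : truncWeight k D 0 = Pi.single 1 1 := by
  ext π
  by_cases hπ : π = 1
  · subst hπ
    simp [truncWeight, numCycles]
  · obtain ⟨x, hx⟩ : ∃ x, π x ≠ x := by simpa [Equiv.Perm.ext_iff] using hπ
    rw [truncWeight_eq_zero (Nat.zero_le _) hx, Pi.single_eq_of_ne hπ]

theorem truncWeight_self (π : Perm (Fin k)) :
    truncWeight k D k π = ((sign π : ℤ) : ℝ) * (D : ℝ) ^ numCycles π := by
  rw [truncWeight_of_fixed fun x hx => absurd x.isLt (not_lt.2 hx), Nat.sub_self, Nat.sub_zero]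

theorem truncWeight_succ (t : Fin k) (π : Perm (Fin k)) :
    truncWeight k D (t + 1) π =
      D * truncWeight k D t π - ∑ j ∈ Iio t, truncWeight k D t (π * swap j t) := by
  have hswap : ∀ j, π j ≠ t → truncWeight k D t (π * swap j t) = 0 := fun j hj =>
    truncWeight_eq_zero le_rfl (by simpa using hj)
  by_cases hmove : ∃ x : Fin k, (t : ℕ) + 1 ≤ x ∧ π x ≠ x
  · obtain ⟨x, hx, hπx⟩ := hmove
    rw [truncWeight_eq_zero hx hπx, truncWeight_eq_zero (by omega) hπx, sum_eq_zero, mul_zero,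
      sub_zero]
    intro j hj
    have hjt : (j : ℕ) < t := Fin.lt_def.1 (Finset.mem_Iio.1 hj)
    refine truncWeight_eq_zero (x := x) (by omega) ?_
    rwa [Perm.mul_apply, swap_apply_of_ne_of_ne (by omega) (by omega)]
  have hfix : ∀ x : Fin k, (t : ℕ) + 1 ≤ x → π x = x := by simpa using hmove
  have hge := sub_le_numCycles_of_fixed hfix
  rw [truncWeight_of_fixed hfix]
  by_cases hπt : π t = t
  · have hfix' : ∀ x : Fin k, (t : ℕ) ≤ x → π x = x := fun x hx =>
      (eq_or_lt_of_le hx).elim (fun h => Fin.ext h.symm ▸ hπt) (hfix x)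
    rw [truncWeight_of_fixed hfix', sum_eq_zero fun j hj =>
      hswap j fun h => (mem_Iio.1 hj).ne (π.injective (h.trans hπt.symm))]
    have hge' := sub_le_numCycles_of_fixed hfix'
    rw [show numCycles π - (k - (t + 1)) = numCycles π - (k - t) + 1 by omega, pow_succ]
    ring
  · -- only the transposition of `t` with its preimage `π⁻¹ t` contributes
    have ha : π (π⁻¹ t) = t := π.apply_symm_apply t
    have hat := inv_apply_lt_of_fixed hfix hπt
    rw [truncWeight_eq_zero le_rfl hπt, sum_eq_single_of_mem _ (mem_Iio.2 hat)
      fun j _ hja => hswap j fun h => hja (π.injective (h.trans ha.symm)),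
      truncWeight_of_fixed (mul_swap_inv_apply_fixed hfix hπt), numCycles_mul_swap_inv_apply hπt,
      Perm.sign_mul, sign_swap hat.ne,
      show numCycles π + 1 - (k - t) = numCycles π - (k - (t + 1)) by omega]
    push_cast
    ring

end TruncWeight

section Factorization

variable {k D : ℕ}

theorem convMatrix_truncWeight_succ (t : Fin k) :
    convMatrix (truncWeight k D (t + 1)) =
      convMatrix (truncWeight k D t) * ((D : ℝ) • 1 - jucysMurphy t) := by
  rw [Matrix.mul_sub, Matrix.mul_smul, Matrix.mul_one, convMatrix_mul_jucysMurphy]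
  ext σ τ
  simp [truncWeight_succ]

theorem sum_truncWeight {n : ℕ} (hn : n ≤ k) :
    ∑ π, truncWeight k D n π = (descPochhammer ℝ n).eval (D : ℝ) := by
  induction n with
  | zero => simp [truncWeight_zero]
  | succ n ih =>
    let t : Fin k := ⟨n, hn⟩
    have hshift : ∀ j ∈ Iio t, ∑ π, truncWeight k D t (π * swap j t) = ∑ π, truncWeight k D t π :=
      fun j _ => Equiv.sum_comp (Equiv.mulRight (swap j t)) _
    simp_rw [show n + 1 = (t : ℕ) + 1 from rfl, truncWeight_succ t, sum_sub_distrib, ← mul_sum]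
    rw [sum_comm, sum_congr rfl hshift, sum_const, Fin.card_Iio, nsmul_eq_mul, ← sub_mul,
      ih (Nat.le_of_succ_le hn), descPochhammer_succ_eval]
    ring

theorem isUnit_convMatrix_truncWeight_and_inv_nonneg {n : ℕ} (hnk : n ≤ k) (hnD : n ≤ D) :
    IsUnit (convMatrix (truncWeight k D n)) ∧
      ∀ σ τ, 0 ≤ (convMatrix (truncWeight k D n))⁻¹ σ τ := by
  induction n with
  | zero =>
    rw [truncWeight_zero, convMatrix_single_one, inv_one]
    exact ⟨isUnit_one, fun σ τ => by rw [Matrix.one_apply]; split_ifs <;> norm_num⟩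
  | succ n ih =>
    let t : Fin k := ⟨n, hnk⟩
    obtain ⟨hunit, hinv⟩ := ih (Nat.le_of_succ_le hnk) (Nat.le_of_succ_le hnD)
    have hrow (σ) : ∑ τ, jucysMurphy t σ τ ≤ n := (sum_jucysMurphy_apply t σ).le
    have hnD' : (n : ℝ) < D := by exact_mod_cast hnD
    rw [show n + 1 = (t : ℕ) + 1 from rfl, convMatrix_truncWeight_succ t]
    exact ⟨hunit.mul (isUnit_smul_one_sub (jucysMurphy_nonneg t) hrow hnD'),
      mul_inv_apply_nonneg hinv (inv_smul_one_sub_nonneg (jucysMurphy_nonneg t) hrow hnD')⟩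

end Factorization

/-- For all `k ≥ 1` and `D ≥ k`, the Gram matrix `G_D` is invertible and
the unitary Weingarten function `Wg^U(τ, D) = (G_D⁻¹)(id, τ)` satisfies
`∑_{τ ∈ S_k} |Wg^U(τ, D)| = (D−k)!/D!`. -/
theorem weingarten_abs_sum :
    ∀ (k D : ℕ), 1 ≤ k → k ≤ D →
      IsUnit (permGram k D) ∧
      ∑ τ : Equiv.Perm (Fin k), |(permGram k D)⁻¹ 1 τ|
        = (Nat.factorial (D - k) : ℝ) / (Nat.factorial D : ℝ) := by
  intro k D _ hkD
  obtain ⟨hT, hTinv⟩ := isUnit_convMatrix_truncWeight_and_inv_nonneg le_rfl hkD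
  set T := convMatrix (truncWeight k D k)
  set Δ := diagonal fun π : Perm (Fin k) => ((sign π : ℤ) : ℝ)
  have hΔ : Δ * Δ = 1 := by simp [Δ, diagonal_mul_diagonal, ← Int.cast_mul, ← Units.val_mul]
  have hG : permGram k D = Δ * T * Δ := by
    rw [diagonal_mul_convMatrix_mul_diagonal sign]
    ext σ τ
    simp [permGram, truncWeight_self, ← mul_assoc, ← Int.cast_mul, ← Units.val_mul]
  have hGinv : (permGram k D)⁻¹ = Δ * T⁻¹ * Δ := by
    rw [hG, Matrix.mul_inv_rev, Matrix.mul_inv_rev, inv_eq_left_inv hΔ, Matrix.mul_assoc]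
  have hΔunit : IsUnit Δ := .of_mul_eq_one Δ hΔ
  refine ⟨hG ▸ (hΔunit.mul hT).mul hΔunit, ?_⟩
  calc ∑ τ, |(permGram k D)⁻¹ 1 τ| = ∑ τ, T⁻¹ 1 τ := by
        refine sum_congr rfl fun τ _ => ?_
        rw [hGinv, mul_diagonal, diagonal_mul, abs_mul, abs_mul, abs_unit_intCast,
          abs_unit_intCast, one_mul, mul_one, abs_of_nonneg (hTinv 1 τ)]
    _ = (D.descFactorial k : ℝ)⁻¹ := by
        rw [sum_inv_apply_eq_inv hT (sum_convMatrix_apply _) 1, sum_truncWeight le_rfl,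
          descPochhammer_eval_eq_descFactorial]
    _ = (D - k).factorial / D.factorial := by
        rw [← Nat.factorial_mul_descFactorial hkD, Nat.cast_mul, div_mul_cancel_left₀]
        positivity
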